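/- For every real constant c ≠ 0, the ordinary differential equation 2u'' = c² − u² has a nonconstant periodic solution: there exist a twice continuously differentiable function u : ℝ → ℝ and a real number T > 0 such that u(t + T) = u(t) for all t ∈ ℝ, u is not constant, and 2·u''(t) = c² − u(t)² for every t ∈ ℝ. -/

import Mathlib

/-!
A solution lies on the zero-energy orbit `u'² = c²u - u³/3`, which oscillates between `0` and
`A = √3 |c|`. The substitution `u = A sin² θ` turns this orbit into the phase equation
`θ'² = A (1 + sin² θ) / 12`, i.e. `θ' = Φ θ` with `Φ` positive and `π`-periodic. That equation
is solved globally by inverting the travel time `x ↦ ∫₀ˣ 1 / Φ`; the phase then advances by `π`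
in a fixed time `T`, so `u` is `T`-periodic, and a direct computation gives `2u'' = c² - u²`.
-/

open Real Function Filter

noncomputable def travelTime (Φ : ℝ → ℝ) (x : ℝ) : ℝ := ∫ s in (0 : ℝ)..x, (Φ s)⁻¹

section travelTime

variable {Φ : ℝ → ℝ} {L : ℝ}

@[simp] lemma travelTime_zero : travelTime Φ 0 = 0 := intervalIntegral.integral_same

lemma hasDerivAt_travelTime (hcont : Continuous Φ) (hpos : ∀ x, 0 < Φ x) (x : ℝ) :
    HasDerivAt (travelTime Φ) (Φ x)⁻¹ x :=
  ((hcont.inv₀ fun x => (hpos x).ne').integral_hasStrictDerivAt 0 x).hasDerivAt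

lemma strictMono_travelTime (hcont : Continuous Φ) (hpos : ∀ x, 0 < Φ x) :
    StrictMono (travelTime Φ) :=
  strictMono_of_deriv_pos fun x =>
    (hasDerivAt_travelTime hcont hpos x).deriv ▸ inv_pos.2 (hpos x)

lemma travelTime_add_period (hcont : Continuous Φ) (hpos : ∀ x, 0 < Φ x) (hper : Periodic Φ L)
    (x : ℝ) : travelTime Φ (x + L) = travelTime Φ x + travelTime Φ L := by
  have hint : Continuous fun s => (Φ s)⁻¹ := hcont.inv₀ fun x => (hpos x).ne'
  have hperinv : Periodic (fun s => (Φ s)⁻¹) L := fun s => by simp only [hper s]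
  rw [travelTime, ← intervalIntegral.integral_add_adjacent_intervals
    (hint.intervalIntegrable 0 x) (hint.intervalIntegrable x (x + L)),
    hperinv.intervalIntegral_add_eq x 0, zero_add, travelTime, travelTime]

lemma travelTime_add_nat_mul_period (hcont : Continuous Φ) (hpos : ∀ x, 0 < Φ x)
    (hper : Periodic Φ L) (x : ℝ) (n : ℕ) :
    travelTime Φ (x + n * L) = travelTime Φ x + n * travelTime Φ L := by
  induction n with
  | zero => simp
  | succ n ih =>
    rw [Nat.cast_succ, add_one_mul, ← add_assoc, travelTime_add_period hcont hpos hper, ih,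
      add_one_mul, add_assoc]

lemma surjective_travelTime (hcont : Continuous Φ) (hpos : ∀ x, 0 < Φ x) (hper : Periodic Φ L)
    (hL : 0 < L) : Surjective (travelTime Φ) := by
  have hmono := strictMono_travelTime hcont hpos
  have hT : 0 < travelTime Φ L := by simpa using hmono hL
  have hnat (n : ℕ) : travelTime Φ (n * L) = n * travelTime Φ L := by
    simpa using travelTime_add_nat_mul_period hcont hpos hper 0 n
  have hneg (n : ℕ) : travelTime Φ (-(n * L)) = -(n * travelTime Φ L) := by
    have := travelTime_add_nat_mul_period hcont hpos hper (-(n * L)) n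
    rw [neg_add_cancel, travelTime_zero] at this
    linarith
  refine Continuous.surjective
    (continuous_iff_continuousAt.2 (hasDerivAt_travelTime hcont hpos · |>.continuousAt))
    (hmono.monotone.tendsto_atTop_atTop fun b => ?_)
    (hmono.monotone.tendsto_atBot_atBot fun b => ?_)
  · obtain ⟨n, hn⟩ := exists_nat_ge (b / travelTime Φ L)
    exact ⟨n * L, hnat n ▸ (div_le_iff₀ hT).1 hn⟩
  · obtain ⟨n, hn⟩ := exists_nat_ge (-b / travelTime Φ L)
    refine ⟨-(n * L), hneg n ▸ ?_⟩
    linarith [(div_le_iff₀ hT).1 hn]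

end travelTime

theorem exists_solution_of_pos_of_periodic {Φ : ℝ → ℝ} {L : ℝ} (hcont : Continuous Φ)
    (hpos : ∀ x, 0 < Φ x) (hper : Periodic Φ L) (hL : 0 < L) :
    ∃ θ : ℝ → ℝ, (∀ t, HasDerivAt θ (Φ (θ t)) t) ∧ Surjective θ ∧
      ∃ T > 0, ∀ t, θ (t + T) = θ t + L := by
  have hmono := strictMono_travelTime hcont hpos
  let e := hmono.orderIsoOfSurjective _ (surjective_travelTime hcont hpos hper hL)
  have he : ∀ t, travelTime Φ (e.symm t) = t := e.apply_symm_apply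
  refine ⟨e.symm, fun t => ?_, e.symm.surjective, travelTime Φ L, by simpa using hmono hL,
    fun t => hmono.injective ?_⟩
  · simpa using (hasDerivAt_travelTime hcont hpos (e.symm t)).of_local_left_inverse
      e.symm.continuous.continuousAt (inv_pos.2 (hpos _)).ne' (.of_forall he)
  · rw [he, travelTime_add_period hcont hpos hper, he]

theorem contDiff_succ_of_hasDerivAt_comp {F θ : ℝ → ℝ} {n : ℕ} (hF : ContDiff ℝ n F)
    (hθ : ∀ t, HasDerivAt θ (F (θ t)) t) : ContDiff ℝ (n + 1) θ := by
  have hderiv : deriv θ = F ∘ θ := funext fun t => (hθ t).deriv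
  induction n with
  | zero =>
    refine contDiff_succ_iff_deriv.2 ⟨fun t => (hθ t).differentiableAt, by simp, ?_⟩
    rw [hderiv, Nat.cast_zero, contDiff_zero]
    exact hF.continuous.comp (continuous_iff_continuousAt.2 fun t => (hθ t).continuousAt)
  | succ n ih =>
    refine contDiff_succ_iff_deriv.2 ⟨fun t => (hθ t).differentiableAt, by simp, ?_⟩
    rw [hderiv]
    exact hF.comp (ih (hF.of_le (by norm_cast; omega)))

noncomputable def phaseSpeed (A x : ℝ) : ℝ := √(A * (1 + sin x ^ 2) / 12)

section phaseSpeed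

variable {A : ℝ}

lemma phaseSpeed_radicand_pos (hA : 0 < A) (x : ℝ) : 0 < A * (1 + sin x ^ 2) / 12 := by
  positivity

lemma phaseSpeed_pos (hA : 0 < A) (x : ℝ) : 0 < phaseSpeed A x :=
  sqrt_pos.2 (phaseSpeed_radicand_pos hA x)

lemma phaseSpeed_sq (hA : 0 < A) (x : ℝ) : phaseSpeed A x ^ 2 = A * (1 + sin x ^ 2) / 12 :=
  sq_sqrt (phaseSpeed_radicand_pos hA x).le

lemma contDiff_phaseSpeed (hA : 0 < A) {n : WithTop ℕ∞} : ContDiff ℝ n (phaseSpeed A) :=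
  ContDiff.sqrt (by fun_prop) fun x => (phaseSpeed_radicand_pos hA x).ne'

lemma periodic_phaseSpeed : Periodic (phaseSpeed A) π := fun x => by
  simp only [phaseSpeed, sin_add_pi, neg_sq]

lemma hasDerivAt_phaseSpeed (hA : 0 < A) (x : ℝ) :
    HasDerivAt (phaseSpeed A) (A * (2 * sin x * cos x) / 12 / (2 * phaseSpeed A x)) x := by
  have hsin_sq : HasDerivAt (fun y => sin y ^ 2) (2 * sin x * cos x) x := by
    simpa [mul_comm] using (hasDerivAt_sin x).fun_pow 2
  exact (((hsin_sq.const_add 1).const_mul A).div_const 12).sqrt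
    (phaseSpeed_radicand_pos hA x).ne'

end phaseSpeed

theorem two_mul_deriv_deriv_mul_sin_sq {A : ℝ} (hA : 0 < A) {θ : ℝ → ℝ}
    (hθ : ∀ t, HasDerivAt θ (phaseSpeed A (θ t)) t) (t : ℝ) :
    2 * deriv (deriv fun t => A * sin (θ t) ^ 2) t = A ^ 2 / 3 - (A * sin (θ t) ^ 2) ^ 2 := by
  have hu' : deriv (fun t => A * sin (θ t) ^ 2) =
      fun t => 2 * A * sin (θ t) * cos (θ t) * phaseSpeed A (θ t) := by
    funext t
    refine ((((hasDerivAt_sin _).comp t (hθ t)).pow 2).const_mul A).deriv.trans ?_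
    simp only [comp_apply]
    ring
  have hΦθ : HasDerivAt (fun t => phaseSpeed A (θ t)) (A * sin (θ t) * cos (θ t) / 12) t := by
    refine ((hasDerivAt_phaseSpeed hA _).comp t (hθ t)).congr_deriv ?_
    field_simp [(phaseSpeed_pos hA (θ t)).ne']
  have hu'' : HasDerivAt (fun t => 2 * A * sin (θ t) * cos (θ t) * phaseSpeed A (θ t)) _ t :=
    ((((hasDerivAt_sin _).comp t (hθ t)).const_mul (2 * A)).fun_mul
      ((hasDerivAt_cos _).comp t (hθ t))).fun_mul hΦθ
  rw [hu', hu''.deriv]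
  simp only [comp_apply]
  linear_combination (4 * A * (cos (θ t) ^ 2 - sin (θ t) ^ 2)) * phaseSpeed_sq hA (θ t)
    + (A ^ 2 / 3 * (1 + 2 * sin (θ t) ^ 2)) * sin_sq_add_cos_sq (θ t)

/-- For every real constant `c ≠ 0`, the ODE `2u'' = c² − u²` has a nonconstant
periodic solution. -/
theorem ode_has_nonconstant_periodic_solution (c : ℝ) (hc : c ≠ 0) :
    ∃ (u : ℝ → ℝ) (T : ℝ), ContDiff ℝ 2 u ∧ 0 < T ∧
      (∀ t : ℝ, u (t + T) = u t) ∧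
      (∃ t t' : ℝ, u t ≠ u t') ∧
      (∀ t : ℝ, 2 * deriv (deriv u) t = c ^ 2 - (u t) ^ 2) := by
  set A := √3 * |c|
  have hA : 0 < A := by positivity
  have hA_sq : A ^ 2 / 3 = c ^ 2 := by
    rw [mul_pow, sq_sqrt (by norm_num), sq_abs]; ring
  obtain ⟨θ, hθ, hθ_surj, T, hT, hθ_T⟩ := exists_solution_of_pos_of_periodic
    (contDiff_phaseSpeed hA (n := 0)).continuous (phaseSpeed_pos hA) periodic_phaseSpeed pi_pos
  obtain ⟨t₀, hθ₀⟩ := hθ_surj 0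
  obtain ⟨t₁, hθ₁⟩ := hθ_surj (π / 2)
  refine ⟨fun t => A * sin (θ t) ^ 2, T, ?_, hT, fun t => ?_, ⟨t₁, t₀, ?_⟩, fun t => ?_⟩
  · exact contDiff_const.mul ((contDiff_sin.comp
      (contDiff_succ_of_hasDerivAt_comp (n := 1) (contDiff_phaseSpeed hA) hθ)).pow 2)
  · simp only [hθ_T, sin_add_pi, neg_sq]
  · simp [hθ₀, hθ₁, hA.ne']
  · rw [two_mul_deriv_deriv_mul_sin_sq hA hθ, hA_sq]
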